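/- arXiv:2405.08599 — 2 statements merged into one kernel-verified Lean document; each statement's English description precedes it below -/
import Mathlib

section
/- Let e₂, e₃ : [0, T̄) → ℝ be nonnegative differentiable functions, η̄(t) > 0 continuous on [0,T̄), with ė₃(t) ≤ -η̄(t)(e₃(t) - e₂(t)). Fix k ≥ 2 and suppose e₂(t) satisfies e₂(t) = ρ(t)^{-2}e^{-γt}e₂(0) where the solution of ż = -(1-1/k)η̄(t)z starting from z(a) at time a equals ρ(t)^{-2(1-1/k)}e^{-γ(1-1/k)(t-a)}ρ(a)^{2(1-1/k)}z(a) (with η̄(t) = γ + 2ρ̇(t)/ρ(t)). If e₃(0) ≥ k·e₂(0), then e₃(t) ≤ ρ(t)^{-2(1-1/k)}e^{-γ(1-1/k)t}e₃(0) for all t ∈ [0, T̄). -/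
/-!
Put `κ = 1 - 1/k` and `W(t) = e₃(t) ρ(t)^{2κ} e^{γκt}`, so that the claim is `W ≤ W(0) = e₃(0)`.
Since `η̄ = γ + 2ρ̇/ρ`, we get `Ẇ = ρ^{2κ} e^{γκt} (ė₃ + κ η̄ e₃)`, which is `≤ 0` wherever
`e₃ ≥ k e₂`. Wherever `e₃ ≤ k e₂`, the explicit form of `e₂` and `ρ ≥ 1` give directly
`W ≤ k e₂(0) ≤ e₃(0)`. Hence `W` is nonincreasing wherever it exceeds `e₃(0)`, so it never does.
-/

open Set Real

theorem image_le_of_hasDerivAt_nonpos_above {f f' : ℝ → ℝ} {a b C : ℝ}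
    (hf : ContinuousOn f (Icc a b))
    (hf' : ∀ x ∈ Ioo a b, HasDerivAt f (f' x) x) (ha : f a ≤ C)
    (hdecr : ∀ x ∈ Ioo a b, C < f x → f' x ≤ 0) : ∀ x ∈ Icc a b, f x ≤ C := by
  intro x hx
  by_contra! hfx
  set S := Icc a x ∩ f ⁻¹' Iic C
  have hS : IsClosed S :=
    (hf.mono (Icc_subset_Icc_right hx.2)).preimage_isClosed_of_isClosed isClosed_Icc isClosed_Iic
  have haS : a ∈ S := ⟨left_mem_Icc.2 hx.1, ha⟩
  have hbdd : BddAbove S := ⟨x, fun y hy => hy.1.2⟩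
  have hcS : sSup S ∈ S := hS.csSup_mem ⟨a, haS⟩ hbdd
  have hac : a ≤ sSup S := le_csSup hbdd haS
  have hcx : sSup S < x := hcS.1.2.lt_of_ne fun h => (h ▸ hcS.2 : f x ≤ C).not_gt hfx
  have hgt : ∀ y ∈ Ioc (sSup S) x, C < f y := fun y hy =>
    not_le.1 fun hle => hy.1.not_ge (le_csSup hbdd ⟨⟨hac.trans hy.1.le, hy.2⟩, hle⟩)
  have hanti : AntitoneOn f (Icc (sSup S) x) := by
    have hsub : Ioo (sSup S) x ⊆ Ioo a b := Ioo_subset_Ioo hac hx.2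
    refine antitoneOn_of_hasDerivWithinAt_nonpos (f' := f') (convex_Icc _ _)
      (hf.mono (Icc_subset_Icc hac hx.2)) ?_ ?_ <;> rw [interior_Icc]
    · exact fun y hy => (hf' y (hsub hy)).hasDerivWithinAt
    · exact fun y hy => hdecr y (hsub hy) (hgt y (Ioo_subset_Ioc_self hy))
  exact (hanti (left_mem_Icc.2 hcx.le) (right_mem_Icc.2 hcx.le) hcx.le).not_gt
    (hcS.2.trans_lt hfx)

theorem hasDerivAt_mul_rpow_mul_exp {e ρ : ℝ → ℝ} {e' ρ' p c t : ℝ} (he : HasDerivAt e e' t)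
    (hρ : HasDerivAt ρ ρ' t) (hρt : 0 < ρ t) :
    HasDerivAt (fun u => e u * ρ u ^ p * exp (c * u))
      (ρ t ^ p * exp (c * t) * (e' + (c + p * ρ' / ρ t) * e t)) t := by
  have hexp : HasDerivAt (fun u => exp (c * u)) (exp (c * t) * c) t :=
    ((hasDerivAt_id t).const_mul c).exp.congr_deriv (by simp)
  refine ((he.mul (hρ.rpow_const (p := p) (Or.inl hρt.ne'))).mul hexp).congr_deriv ?_
  rw [Pi.mul_apply, rpow_sub_one hρt.ne']
  field_simp
  ring

theorem mul_rpow_mul_exp_le_of_le {ρ γ t k e₂ e₃ : ℝ} (hρ : 1 ≤ ρ) (hγ : 0 ≤ γ) (ht : 0 ≤ t)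
    (hk : 0 < k) (he₂ : 0 ≤ e₂) (hle : e₃ ≤ k * (ρ ^ (-2 : ℝ) * exp (-γ * t) * e₂)) :
    e₃ * ρ ^ (2 * (1 - 1 / k)) * exp (γ * (1 - 1 / k) * t) ≤ k * e₂ := by
  have hρ0 : 0 < ρ := one_pos.trans_le hρ
  have hweight : ρ ^ (-2 : ℝ) * exp (-γ * t) * (ρ ^ (2 * (1 - 1 / k)) * exp (γ * (1 - 1 / k) * t))
      = ρ ^ (-(2 / k)) * exp (-(γ * t / k)) := by
    rw [show -(2 / k) = -2 + 2 * (1 - 1 / k) by ring, rpow_add hρ0,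
      show -(γ * t / k) = -γ * t + γ * (1 - 1 / k) * t by ring, exp_add]
    ring
  have hweight_le : ρ ^ (-(2 / k)) * exp (-(γ * t / k)) ≤ 1 :=
    mul_le_one₀ (rpow_le_one_of_one_le_of_nonpos hρ (neg_nonpos.2 (by positivity)))
      (exp_nonneg _) (exp_le_one_iff.2 (neg_nonpos.2 (by positivity)))
  calc e₃ * ρ ^ (2 * (1 - 1 / k)) * exp (γ * (1 - 1 / k) * t)
      ≤ k * (ρ ^ (-2 : ℝ) * exp (-γ * t) * e₂) * ρ ^ (2 * (1 - 1 / k))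
          * exp (γ * (1 - 1 / k) * t) := by gcongr
    _ = k * e₂ * (ρ ^ (-(2 / k)) * exp (-(γ * t / k))) := by rw [← hweight]; ring
    _ ≤ k * e₂ := mul_le_of_le_one_right (by positivity) hweight_le

theorem add_mul_le_zero_of_mul_le {k η x₂ x₃ x₃' : ℝ} (hk : 0 < k) (hη : 0 ≤ η)
    (hdom : k * x₂ ≤ x₃) (hineq : x₃' ≤ -η * (x₃ - x₂)) : x₃' + (1 - 1 / k) * η * x₃ ≤ 0 := by
  have hx₂ : x₂ ≤ x₃ / k := (le_div_iff₀' hk).2 hdom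
  have hgap : (1 - 1 / k) * x₃ ≤ x₃ - x₂ := by
    rw [sub_mul, one_mul, one_div_mul_eq_div]; linarith
  nlinarith [mul_le_mul_of_nonneg_left hgap hη]

theorem le_rpow_neg_mul_exp_neg_mul_of_mul_rpow_mul_exp_le {x ρ p c b : ℝ} (hρ : 0 < ρ)
    (h : x * ρ ^ p * exp c ≤ b) : x ≤ ρ ^ (-p) * exp (-c) * b := by
  rw [rpow_neg hρ.le, exp_neg, ← mul_inv, inv_mul_eq_div,
    le_div_iff₀ (mul_pos (rpow_pos_of_pos hρ p) (exp_pos c)), ← mul_assoc]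
  exact h

theorem mul_rpow_mul_exp_le_of_deriv_le {T γ k : ℝ} {ρ ηb e₂ e₃ e₃' : ℝ → ℝ} (hγ : 0 ≤ γ)
    (hk : 1 ≤ k) (hρ1 : ∀ t ∈ Ico 0 T, 1 ≤ ρ t) (hρ0 : ρ 0 = 1)
    (hρc : ContinuousOn ρ (Ico 0 T)) (hρd : ∀ t ∈ Ioo 0 T, DifferentiableAt ℝ ρ t)
    (hηb : ∀ t ∈ Ioo 0 T, ηb t = γ + 2 * deriv ρ t / ρ t) (hηbnn : ∀ t ∈ Ico 0 T, 0 ≤ ηb t)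
    (he₂0 : 0 ≤ e₂ 0) (he₃ : ∀ t ∈ Ico 0 T, HasDerivAt e₃ (e₃' t) t)
    (hineq : ∀ t ∈ Ico 0 T, e₃' t ≤ -ηb t * (e₃ t - e₂ t))
    (he₂ : ∀ t ∈ Ico 0 T, e₂ t = ρ t ^ (-(2 : ℝ)) * exp (-γ * t) * e₂ 0)
    (hinit : k * e₂ 0 ≤ e₃ 0) :
    ∀ t ∈ Ico 0 T, e₃ t * ρ t ^ (2 * (1 - 1 / k)) * exp (γ * (1 - 1 / k) * t) ≤ e₃ 0 := by
  have hk0 : 0 < k := by linarith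
  have hκ : 0 ≤ 1 - 1 / k := by rw [sub_nonneg, div_le_one hk0]; exact hk
  have hρpos (t : ℝ) (ht : t ∈ Ico 0 T) : 0 < ρ t := one_pos.trans_le (hρ1 t ht)
  intro t ht
  refine image_le_of_hasDerivAt_nonpos_above
    (f := fun u => e₃ u * ρ u ^ (2 * (1 - 1 / k)) * exp (γ * (1 - 1 / k) * u))
    (f' := fun u => ρ u ^ (2 * (1 - 1 / k)) * exp (γ * (1 - 1 / k) * u) *
      (e₃' u + (1 - 1 / k) * ηb u * e₃ u))
    ?_ (fun u hu => ?_) ?_ (fun u hu hgt => ?_) t ⟨ht.1, le_rfl⟩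
  · have hsub : Icc 0 t ⊆ Ico 0 T := Icc_subset_Ico_right ht.2
    have he₃c : ContinuousOn e₃ (Icc 0 t) := fun u hu =>
      (he₃ u (hsub hu)).continuousAt.continuousWithinAt
    exact (he₃c.mul ((hρc.mono hsub).rpow_const fun _ _ => Or.inr (by positivity))).mul
      (by fun_prop)
  · have hu' : u ∈ Ioo 0 T := ⟨hu.1, hu.2.trans ht.2⟩
    refine (hasDerivAt_mul_rpow_mul_exp (he₃ u (Ioo_subset_Ico_self hu'))
      (hρd u hu').hasDerivAt (hρpos u (Ioo_subset_Ico_self hu'))).congr_deriv ?_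
    rw [hηb u hu']
    ring
  · simp [hρ0]
  · have hu' : u ∈ Ico 0 T := ⟨hu.1.le, hu.2.trans ht.2⟩
    have hdom : k * e₂ u ≤ e₃ u := by
      by_contra! hlt
      refine hgt.not_ge ((mul_rpow_mul_exp_le_of_le (hρ1 u hu') hγ hu'.1 hk0 he₂0 ?_).trans hinit)
      rw [← he₂ u hu']
      exact hlt.le
    exact mul_nonpos_of_nonneg_of_nonpos
      (mul_nonneg (rpow_nonneg (hρpos u hu').le _) (exp_nonneg _))
      (add_mul_le_zero_of_mul_le hk0 (hηbnn u hu') hdom (hineq u hu'))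

noncomputable def blowUpProfile (T h t : ℝ) : ℝ := (T / (T - t)) ^ (1 + h)

theorem blowUpProfile_zero {T : ℝ} (hT : T ≠ 0) (h : ℝ) : blowUpProfile T h 0 = 1 := by
  simp [blowUpProfile, hT]

theorem one_le_blowUpProfile {T h t : ℝ} (hh : 0 ≤ 1 + h) (ht : t ∈ Ico 0 T) :
    1 ≤ blowUpProfile T h t :=
  one_le_rpow ((one_le_div (sub_pos.2 ht.2)).2 (sub_le_self _ ht.1)) hh

theorem differentiableOn_blowUpProfile {T : ℝ} (hT : 0 < T) (h : ℝ) :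
    DifferentiableOn ℝ (blowUpProfile T h) (Iio T) := fun t ht =>
  have hTt : 0 < T - t := sub_pos.2 ht
  ((differentiableAt_const T).div (differentiableAt_id.const_sub T) hTt.ne' |>.rpow_const
    (Or.inl (div_pos hT hTt).ne')).differentiableWithinAt

theorem stmt_9_general (T h γ k : ℝ) (hT : 0 < T) (hh : 1 < h) (hγ : 0 < γ)
    (hk : 2 ≤ k) (ρ ηb e₂ e₃ e₃' : ℝ → ℝ)
    (hρ : ∀ t ∈ Ico 0 T, ρ t = (T / (T - t)) ^ (1 + h))
    (hηb : ∀ t ∈ Ico 0 T, ηb t = γ + 2 * deriv ρ t / ρ t)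
    (hηbpos : ∀ t ∈ Ico 0 T, 0 < ηb t)
    (he₂nn : ∀ t ∈ Ico 0 T, 0 ≤ e₂ t)
    (he₃ : ∀ t ∈ Ico 0 T, HasDerivAt e₃ (e₃' t) t)
    (hineq : ∀ t ∈ Ico 0 T, e₃' t ≤ -ηb t * (e₃ t - e₂ t))
    (he₂ : ∀ t ∈ Ico 0 T, e₂ t = (ρ t) ^ (-(2 : ℝ)) * Real.exp (-γ * t) * e₂ 0)
    (hinit : k * e₂ 0 ≤ e₃ 0) :
    ∀ t ∈ Ico 0 T, e₃ t ≤ (ρ t) ^ (-(2 * (1 - 1 / k))) *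
      Real.exp (-γ * (1 - 1 / k) * t) * e₃ 0 := by
  have hρeq : EqOn ρ (blowUpProfile T h) (Ico 0 T) := hρ
  have hρd := differentiableOn_blowUpProfile hT h
  have hρ1 (t : ℝ) (ht : t ∈ Ico 0 T) : 1 ≤ ρ t :=
    hρeq ht ▸ one_le_blowUpProfile (by linarith) ht
  have hW := mul_rpow_mul_exp_le_of_deriv_le hγ.le (by linarith) hρ1
    ((hρeq ⟨le_rfl, hT⟩).trans (blowUpProfile_zero hT.ne' h))
    ((hρd.continuousOn.mono Ico_subset_Iio_self).congr hρeq)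
    (fun t ht => (hρd.differentiableAt (Iio_mem_nhds ht.2)).congr_of_eventuallyEq
      (hρeq.eventuallyEq_of_mem (Ico_mem_nhds_iff.2 ht)))
    (fun t ht => hηb t (Ioo_subset_Ico_self ht)) (fun t ht => (hηbpos t ht).le)
    (he₂nn 0 ⟨le_rfl, hT⟩) he₃ hineq he₂ hinit
  intro t ht
  simpa only [neg_mul] using
    le_rpow_neg_mul_exp_neg_mul_of_mul_rpow_mul_exp_le (one_pos.trans_le (hρ1 t ht)) (hW t ht)

/-- Comparison bound in the PT analysis: if `ė₃ ≤ -η̄(t)(e₃ - e₂)` with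
`e₂(t) = ρ(t)⁻² e^{-γt} e₂(0)`, the scaled dynamics `ż = -(1-1/k) η̄ z` has
the explicit solution formula, and `e₃(0) ≥ k e₂(0)`, then
`e₃(t) ≤ ρ(t)^{-2(1-1/k)} e^{-γ(1-1/k)t} e₃(0)` on `[0, T̄)`. -/
theorem stmt_9 (T h γ k : ℝ) (hT : 0 < T) (hh : 1 < h) (hγ : 0 < γ)
    (hk : 2 ≤ k) (ρ ηb e₂ e₃ e₃' : ℝ → ℝ)
    (hρ : ∀ t ∈ Ico 0 T, ρ t = (T / (T - t)) ^ (1 + h))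
    (hηb : ∀ t ∈ Ico 0 T, ηb t = γ + 2 * deriv ρ t / ρ t)
    (hηbpos : ∀ t ∈ Ico 0 T, 0 < ηb t)
    (he₂nn : ∀ t ∈ Ico 0 T, 0 ≤ e₂ t) (he₃nn : ∀ t ∈ Ico 0 T, 0 ≤ e₃ t)
    (he₃ : ∀ t ∈ Ico 0 T, HasDerivAt e₃ (e₃' t) t)
    (hineq : ∀ t ∈ Ico 0 T, e₃' t ≤ -ηb t * (e₃ t - e₂ t))
    (he₂ : ∀ t ∈ Ico 0 T, e₂ t = (ρ t) ^ (-(2 : ℝ)) * Real.exp (-γ * t) * e₂ 0)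
    (hsol : ∀ a ∈ Ico 0 T, ∀ (z : ℝ → ℝ) (za : ℝ), z a = za →
      (∀ t ∈ Ico a T, HasDerivAt z (-((1 - 1 / k) * ηb t) * z t) t) →
      ∀ t ∈ Ico a T, z t = (ρ t) ^ (-(2 * (1 - 1 / k))) *
        Real.exp (-γ * (1 - 1 / k) * (t - a)) * (ρ a) ^ (2 * (1 - 1 / k)) * za)
    (hinit : k * e₂ 0 ≤ e₃ 0) :
    ∀ t ∈ Ico 0 T, e₃ t ≤ (ρ t) ^ (-(2 * (1 - 1 / k))) *
      Real.exp (-γ * (1 - 1 / k) * t) * e₃ 0 :=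
  stmt_9_general T h γ k hT hh hγ hk ρ ηb e₂ e₃ e₃' hρ hηb hηbpos he₂nn he₃ hineq he₂ hinit
end

section
/- Let e_i : [0,∞) → ℝ be as in the perturbed DBMC with constant gain η > 0, and suppose e_i(t) > 0 for a non-source node i at time t, with j a true parent node of i. Then d/dt e_i(t) ≤ -η·e_i(t) + η·e_j(t) + η‖u‖_∞ where u_{ij}(t) = w_{ij}(t) - w_{ij} and ‖u‖_∞ bounds all |u_{kl}(s)|. -/
open Finset

/-- ISS-Lyapunov estimate for an overestimating node: if `e i t > 0` for a
non-source node `i` with true parent `j`, then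
`d/dt e_i(t) ≤ -η e_i(t) + η e_j(t) + η ‖u‖_∞`. -/
theorem stmt_18 {V : Type*} [Fintype V] [DecidableEq V]
    (N : V → Finset V) (S : Finset V) (w : V → V → ℝ)
    (wt : ℝ → V → V → ℝ) (x : V → ℝ) (X : V → ℝ → ℝ)
    (η U : ℝ) (hη : 0 < η) (hU : 0 ≤ U)
    (i j : V) (t : ℝ) (ht : 0 ≤ t)
    (hi : i ∉ S) (hNne : ∀ k ∉ S, (N k).Nonempty)
    (hu : ∀ (s : ℝ) (k l : V), |wt s k l - w k l| ≤ U)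
    (hj : j ∈ N i) (hjtrue : x i = x j + w i j)
    (hpos : 0 < X i t - x i)
    (hder : HasDerivAt (X i)
      (-η * (X i t - (N i).inf' (hNne i hi) (fun k => X k t + wt t i k))) t) :
    -η * (X i t - (N i).inf' (hNne i hi) (fun k => X k t + wt t i k)) ≤
      -η * (X i t - x i) + η * (X j t - x j) + η * U := by
  have hinf : (N i).inf' (hNne i hi) (fun k => X k t + wt t i k) ≤ X j t + wt t i j :=
    inf'_le _ hj
  have hwt : wt t i j ≤ w i j + U := by
    have := abs_le.mp (hu t i j)
    linarith [this.2]
  nlinarith [hinf, hwt, hη.le]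
end
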